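/- Let s > 0 and σ_s be the measure on ℝ⁴ defined by ∫g dσ_s = ∫_{ℝ³} g(y, √(s²+|y|²)) dy/√(s²+|y|²). Then σ_s ∗ σ_s equals the function (ξ,τ) ↦ 2π·(1 − 4s²/(τ²−|ξ|²))^{1/2}·𝟙{τ ≥ √((2s)²+|ξ|²)}. In particular ‖σ_s ∗ σ_s‖_∞ = 2π and σ_s ∗ σ_s(ξ,τ) < 2π for every (ξ,τ) ∈ ℝ⁴. -/

import Mathlib

/-!
Write `e(y) = √(s² + |y|²)`. Tested against `g`, the convolution `σ_s ∗ σ_s` is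
`∫ dξ ∫ dy g(ξ, e(y) + e(ξ - y)) / (e(y) e(ξ - y))`. For fixed `ξ ≠ 0`, rotate `ξ` to
`(|ξ|, 0, 0)` and use cylindrical coordinates `y = (t, r ω)` about that axis: the inner integral
becomes `2π ∫∫_{r > 0} r g(U + V) / (U V) dt dr` with `U = e(y)`, `V = e(ξ - y)`. The map
`(t, r) ↦ (U, V)` has Jacobian `|ξ| r / (U V)`, so this is `2π / |ξ|` times the integral of
`g(U + V)` over the image region, whose slice `U + V = τ` is an interval of length
`|ξ| (1 - 4s² / (τ² - |ξ|²))^{1/2}` for `τ ≥ √(4s² + |ξ|²)` and is empty otherwise.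
-/

open MeasureTheory Real

noncomputable def hypMeasure (d : ℕ) (s : ℝ) :
    Measure (EuclideanSpace ℝ (Fin d) × ℝ) :=
  Measure.map (fun y => (y, Real.sqrt (s ^ 2 + ‖y‖ ^ 2)))
    ((volume : Measure (EuclideanSpace ℝ (Fin d))).withDensity
      (fun y => ENNReal.ofReal (1 / Real.sqrt (s ^ 2 + ‖y‖ ^ 2))))

noncomputable def doubleDensity3 (s : ℝ) (p : EuclideanSpace ℝ (Fin 3) × ℝ) : ℝ :=
  if Real.sqrt ((2 * s) ^ 2 + ‖p.1‖ ^ 2) ≤ p.2 then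
    2 * Real.pi * Real.sqrt (1 - 4 * s ^ 2 / (p.2 ^ 2 - ‖p.1‖ ^ 2)) else 0

open Set Filter Topology
open scoped ENNReal

theorem setLIntegral_comp_add {G : Type*} [AddCommGroup G] [MeasurableSpace G]
    [MeasurableAdd₂ G] [MeasurableNeg G] (μ ν : Measure G) [SFinite μ] [SFinite ν]
    [ν.IsAddLeftInvariant] {S : Set (G × G)} (hS : MeasurableSet S) {g : G → ℝ≥0∞}
    (hg : Measurable g) :
    ∫⁻ q in S, g (q.1 + q.2) ∂μ.prod ν = ∫⁻ τ, μ {u | (u, τ - u) ∈ S} * g τ ∂ν := by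
  have hS' : MeasurableSet {p : G × G | (p.1, p.2 - p.1) ∈ S} := hS.preimage (by fun_prop)
  have hF : Measurable ({p : G × G | (p.1, p.2 - p.1) ∈ S}.indicator fun p => g p.2) :=
    (hg.comp measurable_snd).indicator hS'
  calc ∫⁻ q in S, g (q.1 + q.2) ∂μ.prod ν
      = ∫⁻ q, {p : G × G | (p.1, p.2 - p.1) ∈ S}.indicator (fun p => g p.2) (q.1, q.1 + q.2)
          ∂μ.prod ν := by
        rw [← lintegral_indicator hS]
        congr 1 with q
        by_cases hq : q ∈ S <;> simp [hq]
    _ = ∫⁻ p, {p : G × G | (p.1, p.2 - p.1) ∈ S}.indicator (fun p => g p.2) p ∂μ.prod ν :=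
        (measurePreserving_prod_add μ ν).lintegral_comp hF
    _ = ∫⁻ τ, μ {u | (u, τ - u) ∈ S} * g τ ∂ν := by
        rw [lintegral_prod_symm _ hF.aemeasurable]
        congr 1 with τ
        rw [mul_comm]
        exact lintegral_indicator_const (hS'.preimage measurable_prodMk_right) (g τ)

theorem lintegral_comp_sq_add_sq {f : ℝ → ℝ≥0∞} (hf : Measurable f) :
    ∫⁻ w : ℝ × ℝ, f (w.1 ^ 2 + w.2 ^ 2) =
      ENNReal.ofReal (2 * π) * ∫⁻ r in Ioi 0, ENNReal.ofReal r * f (r ^ 2) := by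
  rw [← lintegral_comp_polarCoord_symm, polarCoord_target, Measure.volume_eq_prod,
    ← Measure.prod_restrict]
  have hpolar : ∀ p : ℝ × ℝ, (polarCoord.symm p).1 ^ 2 + (polarCoord.symm p).2 ^ 2 = p.1 ^ 2 := by
    intro p
    simp only [polarCoord_symm_apply]
    linear_combination p.1 ^ 2 * cos_sq_add_sin_sq p.2
  simp only [hpolar, smul_eq_mul]
  rw [lintegral_prod _ (by fun_prop)]
  simp only [lintegral_const, Measure.restrict_apply_univ, volume_Ioo]
  rw [lintegral_mul_const' _ _ ENNReal.ofReal_ne_top, mul_comm]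
  ring_nf

theorem lintegral_euclideanSpace_fin_three (f : EuclideanSpace ℝ (Fin 3) → ℝ≥0∞) :
    ∫⁻ y, f y = ∫⁻ z : ℝ × ℝ × ℝ, f !₂[z.1, z.2.1, z.2.2] := by
  let e : EuclideanSpace ℝ (Fin 3) ≃ᵐ ℝ × ℝ × ℝ :=
    (MeasurableEquiv.toLp 2 (Fin 3 → ℝ)).symm.trans
      ((MeasurableEquiv.piFinSuccAbove (fun _ => ℝ) 0).trans
        (MeasurableEquiv.prodCongr (MeasurableEquiv.refl ℝ) MeasurableEquiv.finTwoArrow))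
  have he : MeasurePreserving e :=
    (EuclideanSpace.volume_preserving_symm_measurableEquiv_toLp (Fin 3)).trans
      ((volume_preserving_piFinSuccAbove (fun _ : Fin 3 => ℝ) 0).trans
        ((MeasurePreserving.id volume).prod (volume_preserving_finTwoArrow ℝ)))
  rw [← (he.symm e).lintegral_comp_emb e.symm.measurableEmbedding]
  congr 1 with z
  congr 1
  ext i
  fin_cases i <;> rfl

theorem lintegral_comp_norm_norm_sub_eq_of_norm_eq {E : Type*} [NormedAddCommGroup E]
    [InnerProductSpace ℝ E] [FiniteDimensional ℝ E] [MeasurableSpace E] [BorelSpace E]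
    (F : ℝ → ℝ → ℝ≥0∞) {ξ ξ' : E} (h : ‖ξ‖ = ‖ξ'‖) :
    ∫⁻ y, F ‖y‖ ‖ξ - y‖ = ∫⁻ y, F ‖y‖ ‖ξ' - y‖ := by
  let R := Submodule.reflection (ℝ ∙ (ξ - ξ'))ᗮ
  have hR : R ξ = ξ' := Submodule.reflection_sub h
  rw [← R.measurePreserving.lintegral_comp_emb R.toHomeomorph.measurableEmbedding]
  congr 1 with y
  rw [R.norm_map, ← hR, ← R.norm_map (ξ - R y), map_sub, Submodule.reflection_reflection]

theorem lintegral_euclideanSpace_fin_three_comp_norm_sq {F : ℝ → ℝ → ℝ≥0∞}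
    (hF : Measurable (Function.uncurry F)) (ξ : EuclideanSpace ℝ (Fin 3)) :
    ∫⁻ y, F (‖y‖ ^ 2) (‖ξ - y‖ ^ 2) =
      ENNReal.ofReal (2 * π) * ∫⁻ q in (univ ×ˢ Ioi 0 : Set (ℝ × ℝ)),
        ENNReal.ofReal q.2 * F (q.1 ^ 2 + q.2 ^ 2) ((‖ξ‖ - q.1) ^ 2 + q.2 ^ 2) := by
  have hF' {α : Type} [MeasurableSpace α] {u v : α → ℝ} (hu : Measurable u)
      (hv : Measurable v) : Measurable fun x => F (u x) (v x) := hF.comp (hu.prodMk hv)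
  have hnorm : ‖ξ‖ = ‖!₂[‖ξ‖, 0, 0]‖ := by
    simp [EuclideanSpace.norm_eq, Fin.sum_univ_three]
  conv_rhs => rw [Measure.volume_eq_prod, ← Measure.prod_restrict, Measure.restrict_univ,
    lintegral_prod _ (by
      exact (measurable_snd.ennreal_ofReal.mul (hF' (by fun_prop) (by fun_prop))).aemeasurable),
    ← lintegral_const_mul' _ _ ENNReal.ofReal_ne_top]
  rw [lintegral_comp_norm_norm_sub_eq_of_norm_eq (fun u v => F (u ^ 2) (v ^ 2)) hnorm,
    lintegral_euclideanSpace_fin_three, Measure.volume_eq_prod,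
    lintegral_prod _ (hF' (by fun_prop) (by fun_prop)).aemeasurable]
  congr 1 with t
  have hf : Measurable fun ρ => F (t ^ 2 + ρ) ((‖ξ‖ - t) ^ 2 + ρ) :=
    hF' (by fun_prop) (by fun_prop)
  convert lintegral_comp_sq_add_sq hf using 3 with w
  simp [EuclideanSpace.real_norm_sq_eq, Fin.sum_univ_three, add_assoc]

theorem hasFDerivAt_sqrt_add_sq_add_sq (c b : ℝ) {q : ℝ × ℝ}
    (h : c + (b - q.1) ^ 2 + q.2 ^ 2 ≠ 0) :
    HasFDerivAt (fun q : ℝ × ℝ => √(c + (b - q.1) ^ 2 + q.2 ^ 2))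
      (((q.1 - b) / √(c + (b - q.1) ^ 2 + q.2 ^ 2)) • ContinuousLinearMap.fst ℝ ℝ ℝ +
        (q.2 / √(c + (b - q.1) ^ 2 + q.2 ^ 2)) • ContinuousLinearMap.snd ℝ ℝ ℝ) q := by
  have h1 : HasFDerivAt (fun q : ℝ × ℝ => (b - q.1) ^ 2)
      ((2 * (q.1 - b)) • ContinuousLinearMap.fst ℝ ℝ ℝ) q :=
    ((hasFDerivAt_fst.const_sub b).pow 2).congr_fderiv (by ext <;> simp; ring)
  have h2 : HasFDerivAt (fun q : ℝ × ℝ => q.2 ^ 2)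
      ((2 * q.2) • ContinuousLinearMap.snd ℝ ℝ ℝ) q :=
    (hasFDerivAt_snd.pow 2).congr_fderiv (by ext <;> simp)
  exact (((h1.const_add c).add h2).sqrt h).congr_fderiv (by ext <;> simp <;> field_simp)

noncomputable def cylEnergies (s a : ℝ) (q : ℝ × ℝ) : ℝ × ℝ :=
  (√(s ^ 2 + q.1 ^ 2 + q.2 ^ 2), √(s ^ 2 + (a - q.1) ^ 2 + q.2 ^ 2))

noncomputable def fderivCylEnergies (s a : ℝ) (q : ℝ × ℝ) : ℝ × ℝ →L[ℝ] ℝ × ℝ :=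
  (Matrix.toLin (.finTwoProd ℝ) (.finTwoProd ℝ)
    !![q.1 / (cylEnergies s a q).1, q.2 / (cylEnergies s a q).1;
      (q.1 - a) / (cylEnergies s a q).2, q.2 / (cylEnergies s a q).2]).toContinuousLinearMap

theorem hasFDerivAt_cylEnergies (s a : ℝ) {q : ℝ × ℝ} (hq : q.2 ≠ 0) :
    HasFDerivAt (cylEnergies s a) (fderivCylEnergies s a q) q := by
  rw [fderivCylEnergies, Matrix.toLin_finTwoProd_toContinuousLinearMap]
  have hU := hasFDerivAt_sqrt_add_sq_add_sq (s ^ 2) 0 (q := q) (by positivity)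
  have hV := hasFDerivAt_sqrt_add_sq_add_sq (s ^ 2) a (q := q) (by positivity)
  simp only [zero_sub, even_two, Even.neg_pow, sub_zero] at hU
  exact hU.prodMk hV

theorem det_fderivCylEnergies (s a : ℝ) {q : ℝ × ℝ} (hq : q.2 ≠ 0) :
    (fderivCylEnergies s a q).det =
      a * q.2 / ((cylEnergies s a q).1 * (cylEnergies s a q).2) := by
  have hU : (cylEnergies s a q).1 ≠ 0 := by simp only [cylEnergies]; positivity
  have hV : (cylEnergies s a q).2 ≠ 0 := by simp only [cylEnergies]; positivity
  simp only [fderivCylEnergies, LinearMap.det_toContinuousLinearMap, LinearMap.det_toLin,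
    Matrix.det_fin_two_of]
  field_simp
  ring

theorem injOn_cylEnergies (s : ℝ) {a : ℝ} (ha : a ≠ 0) :
    InjOn (cylEnergies s a) (univ ×ˢ Ioi 0) := by
  rintro ⟨t, r⟩ ⟨-, hr : 0 < r⟩ ⟨t', r'⟩ ⟨-, hr' : 0 < r'⟩ h
  obtain ⟨hU, hV⟩ := Prod.ext_iff.mp h
  simp only [cylEnergies] at hU hV
  rw [sqrt_inj (by positivity) (by positivity)] at hU hV
  have ht : t = t' := mul_left_cancel₀ ha (by linear_combination (hU - hV) / 2)
  subst ht
  have hr2 : r ^ 2 = r' ^ 2 := by linarith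
  rw [Prod.mk.injEq, pow_left_inj₀ hr.le hr'.le two_ne_zero] at *
  exact ⟨rfl, hr2⟩

/-- For `(U, V) = cylEnergies s a (t, r)` one has `U² - V² = 2 a t - a²`, so this recovers `t`. -/
noncomputable def axialCoord (a u v : ℝ) : ℝ := (u ^ 2 - v ^ 2 + a ^ 2) / (2 * a)

noncomputable def energyRegion (s a : ℝ) : Set (ℝ × ℝ) :=
  {q | 0 < q.1 ∧ 0 < q.2 ∧ s ^ 2 + axialCoord a q.1 q.2 ^ 2 < q.1 ^ 2}

theorem isOpen_energyRegion (s a : ℝ) : IsOpen (energyRegion s a) :=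
  (isOpen_lt continuous_const continuous_fst).inter <|
    (isOpen_lt continuous_const continuous_snd).inter <|
      isOpen_lt (f := fun q : ℝ × ℝ => s ^ 2 + axialCoord a q.1 q.2 ^ 2) (g := fun q => q.1 ^ 2)
        (by unfold axialCoord; fun_prop) (by fun_prop)

theorem cylEnergies_image {s a : ℝ} (ha : a ≠ 0) :
    cylEnergies s a '' (univ ×ˢ Ioi 0) = energyRegion s a := by
  ext ⟨u, v⟩
  constructor
  · rintro ⟨⟨t, r⟩, ⟨-, hr : 0 < r⟩, h⟩
    simp only [cylEnergies, Prod.mk.injEq] at h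
    obtain ⟨rfl, rfl⟩ := h
    have hu2 : √(s ^ 2 + t ^ 2 + r ^ 2) ^ 2 = s ^ 2 + t ^ 2 + r ^ 2 := sq_sqrt (by positivity)
    have hv2 : √(s ^ 2 + (a - t) ^ 2 + r ^ 2) ^ 2 = s ^ 2 + (a - t) ^ 2 + r ^ 2 :=
      sq_sqrt (by positivity)
    have ht : axialCoord a √(s ^ 2 + t ^ 2 + r ^ 2) √(s ^ 2 + (a - t) ^ 2 + r ^ 2) = t := by
      rw [axialCoord, hu2, hv2]; field_simp; ring
    refine ⟨by positivity, by positivity, ?_⟩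
    simp only [ht, hu2]
    nlinarith
  · rintro ⟨hu, hv, h⟩
    set t := axialCoord a u v with ht
    have hr : 0 < u ^ 2 - s ^ 2 - t ^ 2 := by simp only at h; linarith
    refine ⟨(t, √(u ^ 2 - s ^ 2 - t ^ 2)), ⟨mem_univ _, sqrt_pos.mpr hr⟩, ?_⟩
    have hv2 : s ^ 2 + (a - t) ^ 2 + (u ^ 2 - s ^ 2 - t ^ 2) = v ^ 2 := by
      rw [ht, axialCoord]; field_simp; ring
    simp only [cylEnergies, sq_sqrt hr.le, Prod.mk.injEq]
    constructor
    · rw [show s ^ 2 + t ^ 2 + (u ^ 2 - s ^ 2 - t ^ 2) = u ^ 2 by ring, sqrt_sq hu.le]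
    · rw [hv2, sqrt_sq hv.le]

theorem setLIntegral_energyRegion {s a : ℝ} (ha : 0 < a) (f : ℝ × ℝ → ℝ≥0∞) :
    ∫⁻ p in energyRegion s a, f p =
      ∫⁻ q in (univ ×ˢ Ioi 0 : Set (ℝ × ℝ)), ENNReal.ofReal
        (a * q.2 / ((cylEnergies s a q).1 * (cylEnergies s a q).2)) * f (cylEnergies s a q) := by
  have hmeas : MeasurableSet (univ ×ˢ Ioi 0 : Set (ℝ × ℝ)) :=
    MeasurableSet.univ.prod measurableSet_Ioi
  rw [← cylEnergies_image ha.ne', lintegral_image_eq_lintegral_abs_det_fderiv_mul volume hmeas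
    (fun q hq => (hasFDerivAt_cylEnergies s a (ne_of_gt hq.2)).hasFDerivWithinAt)
    (injOn_cylEnergies s ha.ne')]
  refine setLIntegral_congr_fun hmeas fun q hq => ?_
  have hq2 : 0 < q.2 := hq.2
  rw [det_fderivCylEnergies s a hq2.ne', abs_of_nonneg]
  simp only [cylEnergies]
  positivity

noncomputable def sliceProfile (s a τ : ℝ) : ℝ :=
  if √((2 * s) ^ 2 + a ^ 2) ≤ τ then √(1 - 4 * s ^ 2 / (τ ^ 2 - a ^ 2)) else 0

theorem sq_sub_sq_sub_axialCoord_sq {a : ℝ} (ha : a ≠ 0) (s u τ : ℝ) :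
    u ^ 2 - s ^ 2 - axialCoord a u (τ - u) ^ 2 =
      (τ ^ 2 - a ^ 2 - 4 * s ^ 2) / 4 - (u - τ / 2) ^ 2 * (τ ^ 2 - a ^ 2) / a ^ 2 := by
  unfold axialCoord; field_simp; ring

theorem mem_energyRegion_iff {s a : ℝ} (ha : a ≠ 0) (u τ : ℝ) :
    (u, τ - u) ∈ energyRegion s a ↔ 0 < u ∧ 0 < τ - u ∧
      (u - τ / 2) ^ 2 * (τ ^ 2 - a ^ 2) / a ^ 2 < (τ ^ 2 - a ^ 2 - 4 * s ^ 2) / 4 := by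
  have := sq_sub_sq_sub_axialCoord_sq ha s u τ
  simp only [energyRegion, mem_ofPred_eq]
  constructor <;> rintro ⟨hu, hv, h⟩ <;> exact ⟨hu, hv, by linarith⟩

theorem slice_energyRegion_of_le {s a τ : ℝ} (hs : 0 < s) (ha : 0 < a)
    (hτ : √((2 * s) ^ 2 + a ^ 2) ≤ τ) :
    {u | (u, τ - u) ∈ energyRegion s a} =
      Ioo (τ / 2 - a / 2 * √(1 - 4 * s ^ 2 / (τ ^ 2 - a ^ 2)))
        (τ / 2 + a / 2 * √(1 - 4 * s ^ 2 / (τ ^ 2 - a ^ 2))) := by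
  obtain ⟨hτ0, hτ2⟩ := sqrt_le_iff.mp hτ
  have hτa : a < τ := by nlinarith
  have hD : 0 < τ ^ 2 - a ^ 2 := by nlinarith
  set c := √(1 - 4 * s ^ 2 / (τ ^ 2 - a ^ 2))
  have hc2 : c ^ 2 * (τ ^ 2 - a ^ 2) = τ ^ 2 - a ^ 2 - 4 * s ^ 2 := by
    rw [sq_sqrt (by rw [sub_nonneg, div_le_one hD]; nlinarith)]; field_simp
  have hc1 : c < 1 := (sqrt_lt' one_pos).mpr (by
    have : 0 < 4 * s ^ 2 / (τ ^ 2 - a ^ 2) := by positivity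
    linarith)
  have hc0 : 0 ≤ c := sqrt_nonneg _
  ext u
  rw [mem_ofPred_eq, mem_energyRegion_iff ha.ne', mem_Ioo,
    div_lt_div_iff₀ (pow_pos ha 2) (by norm_num)]
  have key : (u - τ / 2) ^ 2 * (τ ^ 2 - a ^ 2) * 4 < (τ ^ 2 - a ^ 2 - 4 * s ^ 2) * a ^ 2 ↔
      (u - τ / 2) ^ 2 < (a / 2 * c) ^ 2 := by
    rw [← hc2]; constructor <;> intro h <;> nlinarith
  rw [key, sq_lt_sq, abs_of_nonneg (by positivity : 0 ≤ a / 2 * c), abs_lt]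
  constructor
  · rintro ⟨-, -, h⟩; constructor <;> linarith
  · rintro ⟨h₁, h₂⟩
    refine ⟨by nlinarith, by nlinarith, by linarith, by linarith⟩

theorem slice_energyRegion_of_lt {s a τ : ℝ} (ha : 0 < a)
    (hτ : τ < √((2 * s) ^ 2 + a ^ 2)) :
    {u | (u, τ - u) ∈ energyRegion s a} = ∅ := by
  ext u
  simp only [mem_ofPred_eq, mem_energyRegion_iff ha.ne', mem_empty_iff_false, iff_false]
  rintro ⟨hu, hv, h⟩
  have hτ2 : τ ^ 2 < (2 * s) ^ 2 + a ^ 2 := (lt_sqrt (by linarith)).mp hτ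
  rw [div_lt_div_iff₀ (by positivity) (by norm_num)] at h
  rcases le_or_gt a τ with haτ | hτa
  · nlinarith [sq_nonneg (u - τ / 2), mul_nonneg (sq_nonneg (u - τ / 2)) (sub_nonneg.2 haτ)]
  · have hw : 4 * (u - τ / 2) ^ 2 < a ^ 2 := by nlinarith [mul_pos hu hv]
    nlinarith [mul_pos (sub_pos.2 hw) (by nlinarith : 0 < a ^ 2 - τ ^ 2)]

theorem volume_slice_energyRegion {s a : ℝ} (hs : 0 < s) (ha : 0 < a) (τ : ℝ) :
    volume {u | (u, τ - u) ∈ energyRegion s a} = ENNReal.ofReal (a * sliceProfile s a τ) := by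
  unfold sliceProfile
  split_ifs with hτ
  · rw [slice_energyRegion_of_le hs ha hτ, Real.volume_Ioo]
    ring_nf
  · rw [slice_energyRegion_of_lt ha (not_le.mp hτ)]
    simp

theorem setLIntegral_cylEnergies_add {s a : ℝ} (hs : 0 < s) (ha : 0 < a) {g : ℝ → ℝ≥0∞}
    (hg : Measurable g) :
    ∫⁻ q in (univ ×ˢ Ioi 0 : Set (ℝ × ℝ)),
        ENNReal.ofReal (q.2 / ((cylEnergies s a q).1 * (cylEnergies s a q).2)) *
          g ((cylEnergies s a q).1 + (cylEnergies s a q).2) =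
      ∫⁻ τ, ENNReal.ofReal (sliceProfile s a τ) * g τ := by
  have hslices := setLIntegral_comp_add (volume : Measure ℝ) volume
    (isOpen_energyRegion s a).measurableSet hg
  rw [← Measure.volume_eq_prod] at hslices
  have h := setLIntegral_energyRegion (s := s) ha fun p => g (p.1 + p.2)
  simp only [hslices, volume_slice_energyRegion hs ha] at h
  refine (ENNReal.mul_right_inj (ENNReal.ofReal_pos.2 ha).ne' ENNReal.ofReal_ne_top).mp ?_
  calc _ = ∫⁻ q in (univ ×ˢ Ioi 0 : Set (ℝ × ℝ)),
          ENNReal.ofReal (a * q.2 / ((cylEnergies s a q).1 * (cylEnergies s a q).2)) *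
            g ((cylEnergies s a q).1 + (cylEnergies s a q).2) := by
        rw [← lintegral_const_mul' _ _ ENNReal.ofReal_ne_top]
        congr 1 with q
        rw [← mul_assoc, ← ENNReal.ofReal_mul ha.le, mul_div_assoc]
    _ = ∫⁻ τ, ENNReal.ofReal (a * sliceProfile s a τ) * g τ := h.symm
    _ = _ := by
        rw [← lintegral_const_mul' _ _ ENNReal.ofReal_ne_top]
        congr 1 with τ
        rw [← mul_assoc, ← ENNReal.ofReal_mul ha.le]

instance (d : ℕ) (s : ℝ) : SFinite (hypMeasure d s) := by
  unfold hypMeasure; infer_instance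

theorem lintegral_hypMeasure (d : ℕ) (s : ℝ) {g : EuclideanSpace ℝ (Fin d) × ℝ → ℝ≥0∞}
    (hg : Measurable g) :
    ∫⁻ p, g p ∂hypMeasure d s =
      ∫⁻ y, ENNReal.ofReal (1 / √(s ^ 2 + ‖y‖ ^ 2)) * g (y, √(s ^ 2 + ‖y‖ ^ 2)) := by
  rw [hypMeasure, lintegral_map hg (by fun_prop)]
  exact lintegral_withDensity_eq_lintegral_mul _ (by fun_prop) (hg.comp (by fun_prop))

theorem lintegral_conv_hypMeasure (d : ℕ) (s : ℝ) {g : EuclideanSpace ℝ (Fin d) × ℝ → ℝ≥0∞}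
    (hg : Measurable g) :
    ∫⁻ p, g p ∂(hypMeasure d s).conv (hypMeasure d s) =
      ∫⁻ ξ, ∫⁻ y, ENNReal.ofReal (1 / (√(s ^ 2 + ‖y‖ ^ 2) * √(s ^ 2 + ‖ξ - y‖ ^ 2))) *
        g (ξ, √(s ^ 2 + ‖y‖ ^ 2) + √(s ^ 2 + ‖ξ - y‖ ^ 2)) := by
  rw [Measure.lintegral_conv hg,
    lintegral_hypMeasure d s (g := fun x => ∫⁻ y, g (x + y) ∂hypMeasure d s)
      ((hg.comp measurable_add).lintegral_prod_right')]
  refine (lintegral_congr fun y => ?_).trans (lintegral_lintegral_swap ?_)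
  · rw [lintegral_hypMeasure d s (g := fun x => g ((y, √(s ^ 2 + ‖y‖ ^ 2)) + x))
      (hg.comp (measurable_const_add _)), ← lintegral_const_mul' _ _ ENNReal.ofReal_ne_top,
      ← lintegral_sub_right_eq_self _ y]
    congr 1 with ξ
    rw [← mul_assoc, ← ENNReal.ofReal_mul (by positivity), one_div_mul_one_div, Prod.mk_add_mk,
      add_sub_cancel]
  · exact (Measurable.mul (by fun_prop) (hg.comp (by fun_prop))).aemeasurable

theorem doubleDensity3_eq (s : ℝ) (p : EuclideanSpace ℝ (Fin 3) × ℝ) :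
    doubleDensity3 s p = 2 * π * sliceProfile s ‖p.1‖ p.2 := by
  unfold doubleDensity3 sliceProfile
  split_ifs <;> simp

theorem measurable_doubleDensity3 (s : ℝ) : Measurable (doubleDensity3 s) :=
  Measurable.ite (measurableSet_le (by fun_prop) measurable_snd) (by fun_prop) measurable_const

theorem lintegral_energy_add_energy_sub {s : ℝ} (hs : 0 < s) {ξ : EuclideanSpace ℝ (Fin 3)}
    (hξ : ξ ≠ 0) {g : ℝ → ℝ≥0∞} (hg : Measurable g) :
    ∫⁻ y, ENNReal.ofReal (1 / (√(s ^ 2 + ‖y‖ ^ 2) * √(s ^ 2 + ‖ξ - y‖ ^ 2))) *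
        g (√(s ^ 2 + ‖y‖ ^ 2) + √(s ^ 2 + ‖ξ - y‖ ^ 2)) =
      ∫⁻ τ, ENNReal.ofReal (doubleDensity3 s (ξ, τ)) * g τ := by
  let F : ℝ → ℝ → ℝ≥0∞ := fun u v =>
    ENNReal.ofReal (1 / (√(s ^ 2 + u) * √(s ^ 2 + v))) * g (√(s ^ 2 + u) + √(s ^ 2 + v))
  have hF : Measurable (Function.uncurry F) := by unfold F; fun_prop
  calc _ = ∫⁻ y, F (‖y‖ ^ 2) (‖ξ - y‖ ^ 2) := rfl
    _ = ENNReal.ofReal (2 * π) * ∫⁻ q in (univ ×ˢ Ioi 0 : Set (ℝ × ℝ)),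
          ENNReal.ofReal (q.2 / ((cylEnergies s ‖ξ‖ q).1 * (cylEnergies s ‖ξ‖ q).2)) *
            g ((cylEnergies s ‖ξ‖ q).1 + (cylEnergies s ‖ξ‖ q).2) := by
        rw [lintegral_euclideanSpace_fin_three_comp_norm_sq hF]
        congr 1
        refine setLIntegral_congr_fun (MeasurableSet.univ.prod measurableSet_Ioi) fun q hq => ?_
        simp only [F, cylEnergies, ← mul_assoc, ← ENNReal.ofReal_mul hq.2.le, ← add_assoc]
        ring_nf
    _ = ∫⁻ τ, ENNReal.ofReal (doubleDensity3 s (ξ, τ)) * g τ := by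
        rw [setLIntegral_cylEnergies_add hs (norm_pos_iff.2 hξ) hg,
          ← lintegral_const_mul' _ _ ENNReal.ofReal_ne_top]
        congr 1 with τ
        rw [doubleDensity3_eq, ENNReal.ofReal_mul (p := 2 * π) two_pi_pos.le, mul_assoc]

theorem hypMeasure_three_conv_self {s : ℝ} (hs : 0 < s) :
    (hypMeasure 3 s).conv (hypMeasure 3 s) =
      volume.withDensity fun p => ENNReal.ofReal (doubleDensity3 s p) := by
  refine Measure.ext_of_lintegral _ fun g hg => ?_
  rw [lintegral_conv_hypMeasure 3 s hg, lintegral_withDensity_eq_lintegral_mul _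
    (measurable_doubleDensity3 s).ennreal_ofReal hg, Measure.volume_eq_prod,
    lintegral_prod _ ((measurable_doubleDensity3 s).ennreal_ofReal.mul hg).aemeasurable]
  refine lintegral_congr_ae ((Measure.ae_ne volume 0).mono fun ξ hξ => ?_)
  exact lintegral_energy_add_energy_sub hs hξ (hg.comp measurable_prodMk_left)

theorem sliceProfile_lt_one {s : ℝ} (hs : 0 < s) (a τ : ℝ) : sliceProfile s a τ < 1 := by
  unfold sliceProfile
  split_ifs with hτ
  · obtain ⟨-, hτ2⟩ := sqrt_le_iff.mp hτ
    have : 0 < 4 * s ^ 2 / (τ ^ 2 - a ^ 2) := by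
      apply div_pos <;> nlinarith
    exact (sqrt_lt' one_pos).mpr (by linarith)
  · exact one_pos

theorem tendsto_sliceProfile_atTop (s a : ℝ) : Tendsto (sliceProfile s a) atTop (𝓝 1) := by
  have hden : Tendsto (fun τ : ℝ => τ ^ 2 - a ^ 2) atTop atTop :=
    tendsto_atTop_add_const_right _ _ (tendsto_pow_atTop two_ne_zero)
  have hsqrt : Tendsto (fun τ : ℝ => √(1 - 4 * s ^ 2 / (τ ^ 2 - a ^ 2))) atTop (𝓝 1) := by
    simpa using ((tendsto_const_nhds.div_atTop hden).const_sub 1).sqrt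
  refine hsqrt.congr' ?_
  filter_upwards [eventually_ge_atTop √((2 * s) ^ 2 + a ^ 2)] with τ hτ
  simp [sliceProfile, hτ]

theorem doubleDensity3_lt {s : ℝ} (hs : 0 < s) (p : EuclideanSpace ℝ (Fin 3) × ℝ) :
    doubleDensity3 s p < 2 * π := by
  rw [doubleDensity3_eq]
  exact mul_lt_of_lt_one_right two_pi_pos (sliceProfile_lt_one hs _ _)

theorem sSup_range_doubleDensity3 {s : ℝ} (hs : 0 < s) :
    sSup (range (doubleDensity3 s)) = 2 * π := by
  have hlim : Tendsto (fun τ => doubleDensity3 s (0, τ)) atTop (𝓝 (2 * π)) := by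
    simpa [doubleDensity3_eq] using (tendsto_sliceProfile_atTop s 0).const_mul (2 * π)
  refine IsLUB.csSup_eq ⟨?_, fun b hb => le_of_tendsto' hlim fun τ => hb ⟨_, rfl⟩⟩
    (range_nonempty _)
  rintro _ ⟨p, rfl⟩
  exact (doubleDensity3_lt hs p).le

theorem stmt_12 (s : ℝ) (hs : 0 < s) :
    ((hypMeasure 3 s).conv (hypMeasure 3 s) =
      (volume : Measure (EuclideanSpace ℝ (Fin 3) × ℝ)).withDensity
        (fun p => ENNReal.ofReal (doubleDensity3 s p))) ∧
    sSup (Set.range (doubleDensity3 s)) = 2 * Real.pi ∧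
    ∀ p, doubleDensity3 s p < 2 * Real.pi :=
  ⟨hypMeasure_three_conv_self hs, sSup_range_doubleDensity3 hs, doubleDensity3_lt hs⟩
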